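/- Let P_i, Q_i (1 ≤ i ≤ n) be differential operators with each Q_i nonzero of order ℓ_i. Then there exists a differential operator L_r of order at most ℓ_1+⋯+ℓ_n such that P_k Q_k^{-1} P_{k-1} Q_{k-1}^{-1} ⋯ P_1 Q_1^{-1} L_r is a differential operator for every 1 ≤ k ≤ n. -/

import Mathlib

/- Ordinary differential operators with coefficients in ℂ[[x]], realized as
ℂ-linear endomorphisms of ℂ[[x]] generated by multiplication operators and d/dx. -/

noncomputable section

abbrev PS := PowerSeries ℂ

/-- Multiplication by a power series, as a ℂ-linear endomorphism of ℂ[[x]]. -/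
def mulOp (u : PS) : Module.End ℂ PS :=
  { toFun := fun g => u * g
    map_add' := mul_add u
    map_smul' := by intros; exact (Algebra.mul_smul_comm _ _ _) }

/-- Formal differentiation ∂ₓ as a ℂ-linear endomorphism of ℂ[[x]]. -/
def derOp : Module.End ℂ PS := (PowerSeries.derivative (R := ℂ)).toLinearMap

/-- The space of ordinary differential operators of order at most `n`:
the ℂ-span of the operators `u(x) ∘ ∂ₓ^i`, `i ≤ n`. -/
def Dfil (n : ℕ) : Submodule ℂ (Module.End ℂ PS) :=
  Submodule.span ℂ {L | ∃ (u : PS) (i : ℕ), i ≤ n ∧ L = mulOp u * derOp ^ i}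

/-- The algebra `D = ℂ[[x]][∂ₓ]` of ordinary differential operators. -/
def DiffOps : Subalgebra ℂ (Module.End ℂ PS) :=
  Algebra.adjoin ℂ (Set.range mulOp ∪ {derOp})

/-- The order of a differential operator (junk value for non-differential operators). -/
def ordD (L : Module.End ℂ PS) : ℕ := sInf {n | L ∈ Dfil n}

/-- A differential operator is monic if its leading coefficient is `1`, i.e. if
subtracting `∂ₓ^(ord L)` lowers the order (for order `0` this means `L = 1`). -/
def MonicD (L : Module.End ℂ PS) : Prop :=
  L ∈ Dfil (ordD L) ∧
    (if ordD L = 0 then L = 1 else L - derOp ^ ordD L ∈ Dfil (ordD L - 1))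

/-- Evaluation of a two-variable polynomial `F(z,w)` at a pair of elements of a
(not necessarily commutative) ℂ-algebra, with all `z`-powers placed to the left. -/
def eval2 {A : Type*} [Ring A] [Algebra ℂ A] (F : MvPolynomial (Fin 2) ℂ) (P Q : A) : A :=
  (AddMonoidAlgebra.coeff F).sum fun m c => c • (P ^ m 0 * Q ^ m 1)

/- The skew field of fractions of `D`. Since `D` is an Ore domain, it embeds in a division
ring `K` in which every element is a right fraction `a * b⁻¹` of differential operators.
We work with an arbitrary such embedding `ι : DiffOps →+* K`. -/

/-- The order of a fractional differential operator `u = a b⁻¹`, namely `ord a - ord b`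
(this is independent of the chosen presentation; junk value `0` if no presentation exists). -/
def fordK {K : Type*} [DivisionRing K] (ι : DiffOps →+* K) (u : K) : ℤ :=
  letI := Classical.propDecidable
  if h : ∃ a b : DiffOps, a ≠ 0 ∧ b ≠ 0 ∧ u = ι a * (ι b)⁻¹ then
    (ordD (h.choose : Module.End ℂ PS) : ℤ) -
      (ordD (h.choose_spec.choose : Module.End ℂ PS) : ℤ)
  else 0

/-- The denominatorial order of a fractional differential operator: the minimal order of a
nonzero differential operator `L` such that `u · L` is a differential operator. -/
def dordK {K : Type*} [DivisionRing K] (ι : DiffOps →+* K) (u : K) : ℕ :=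
  sInf {n : ℕ | ∃ L : DiffOps, L ≠ 0 ∧ ordD (L : Module.End ℂ PS) = n ∧
    ∃ A : DiffOps, u * ι L = ι A}

/-- A fractional differential operator is monic if it is a fraction of two monic
differential operators (equivalently, its leading coefficient is `1`). -/
def MonicK {K : Type*} [DivisionRing K] (ι : DiffOps →+* K) (u : K) : Prop :=
  ∃ a b : DiffOps, b ≠ 0 ∧ MonicD (a : Module.End ℂ PS) ∧ MonicD (b : Module.End ℂ PS) ∧
    u = ι a * (ι b)⁻¹

/-- The iterated product `g(k) * g(k-1) * ⋯ * g(0)` in a division ring. -/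
def chainProd {K : Type*} [DivisionRing K] (g : ℕ → K) : ℕ → K
  | 0 => g 0
  | k + 1 => g (k + 1) * chainProd g k

/-! The denominator is built one factor at a time. If `u L = B` with `L, B ∈ D` and `Q ≠ 0`,
the right Ore condition gives `Y ≠ 0` with `ord Y ≤ ord Q` and `X` with `B Y = Q X`, and then
`P Q⁻¹ u (L Y) = P X`; the earlier products stay differential operators after multiplying by `Y`.

The Ore condition with this order bound is a rank count over `ℂ[[x]]`. An operator of order
`≤ m` is uniquely `∑_{i ≤ m} ∂ⁱ f_i` (uniqueness: the commutator with `x` lowers the order),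
and in this right normal form right multiplication by `c ∈ ℂ[[x]]` is `f ↦ c • f`. Hence
`(y, x) ↦ B y - Q x` is `ℂ[[x]]`-linear from `ℂ[[x]]^(ord Q + 1) × ℂ[[x]]^(ord B + 1)` to
`ℂ[[x]]^(ord B + ord Q + 1)` and has a nonzero kernel element. -/

lemma mulOp_eq_lmul : mulOp = Algebra.lmul ℂ PS := rfl

lemma mulOp_zero : mulOp 0 = 0 := by
  rw [mulOp_eq_lmul]; exact map_zero _

lemma mulOp_one : mulOp 1 = 1 := by
  rw [mulOp_eq_lmul]; exact map_one _

lemma mulOp_mul (u v : PS) : mulOp (u * v) = mulOp u * mulOp v := by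
  rw [mulOp_eq_lmul]; exact map_mul _ u v

lemma mulOp_injective : Function.Injective mulOp := fun u v h => by
  simpa [mulOp] using LinearMap.congr_fun h 1

lemma derOp_mul_mulOp (u : PS) :
    derOp * mulOp u = mulOp u * derOp + mulOp (PowerSeries.derivative ℂ u) := by
  ext1 g
  change PowerSeries.derivative ℂ (u * g) = u * PowerSeries.derivative ℂ g + _ * g
  rw [Derivation.leibniz, smul_eq_mul, smul_eq_mul, mul_comm g]

lemma derOp_pow_succ_mul_mulOp_X (i : ℕ) :
    derOp ^ (i + 1) * mulOp PowerSeries.X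
      = mulOp PowerSeries.X * derOp ^ (i + 1) + ((i + 1 : ℕ) : ℂ) • derOp ^ i := by
  induction i with
  | zero => simpa [mulOp_one] using derOp_mul_mulOp PowerSeries.X
  | succ i ih =>
    rw [pow_succ', mul_assoc, ih, mul_add, ← mul_assoc, derOp_mul_mulOp, PowerSeries.derivative_X,
      mulOp_one, mul_smul_comm, ← pow_succ', add_mul, one_mul, mul_assoc, ← pow_succ']
    push_cast
    module

lemma dfil_mono {m n : ℕ} (h : m ≤ n) : Dfil m ≤ Dfil n :=
  Submodule.span_mono fun _ ⟨u, i, hi, hL⟩ => ⟨u, i, hi.trans h, hL⟩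

lemma mulOp_mul_derOp_pow_mem_dfil (u : PS) {i n : ℕ} (h : i ≤ n) :
    mulOp u * derOp ^ i ∈ Dfil n :=
  Submodule.subset_span ⟨u, i, h, rfl⟩

lemma mulOp_mem_dfil (u : PS) (n : ℕ) : mulOp u ∈ Dfil n := by
  simpa using mulOp_mul_derOp_pow_mem_dfil u (Nat.zero_le n)

lemma one_mem_dfil (n : ℕ) : (1 : Module.End ℂ PS) ∈ Dfil n := by
  simpa [mulOp_one] using mulOp_mem_dfil 1 n

lemma derOp_mem_dfil_one : derOp ∈ Dfil 1 := by
  simpa [mulOp_one] using mulOp_mul_derOp_pow_mem_dfil 1 (le_refl 1)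

lemma mulOp_mul_mem_dfil (u : PS) {n : ℕ} {L : Module.End ℂ PS} (hL : L ∈ Dfil n) :
    mulOp u * L ∈ Dfil n := by
  refine (Submodule.span_le (p := (Dfil n).comap (LinearMap.mulLeft ℂ (mulOp u)))).2 ?_ hL
  rintro _ ⟨v, i, hi, rfl⟩
  rw [SetLike.mem_coe, Submodule.mem_comap, LinearMap.mulLeft_apply, ← mul_assoc, ← mulOp_mul]
  exact mulOp_mul_derOp_pow_mem_dfil (u * v) hi

lemma derOp_mul_mem_dfil {n : ℕ} {L : Module.End ℂ PS} (hL : L ∈ Dfil n) :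
    derOp * L ∈ Dfil (n + 1) := by
  refine (Submodule.span_le (p := (Dfil (n + 1)).comap (LinearMap.mulLeft ℂ derOp))).2 ?_ hL
  rintro _ ⟨u, i, hi, rfl⟩
  have : derOp * (mulOp u * derOp ^ i)
      = mulOp u * derOp ^ (i + 1) + mulOp (PowerSeries.derivative ℂ u) * derOp ^ i := by
    rw [← mul_assoc, derOp_mul_mulOp, add_mul, mul_assoc, ← pow_succ']
  rw [SetLike.mem_coe, Submodule.mem_comap, LinearMap.mulLeft_apply, this]
  exact add_mem (mulOp_mul_derOp_pow_mem_dfil _ (by omega))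
    (mulOp_mul_derOp_pow_mem_dfil _ (by omega))

lemma derOp_pow_mul_mem_dfil {n : ℕ} (j : ℕ) {L : Module.End ℂ PS} (hL : L ∈ Dfil n) :
    derOp ^ j * L ∈ Dfil (n + j) := by
  induction j with
  | zero => simpa using hL
  | succ j ih => simpa [pow_succ', mul_assoc, ← add_assoc] using derOp_mul_mem_dfil ih

lemma mul_mem_dfil {a b : ℕ} {L M : Module.End ℂ PS} (hL : L ∈ Dfil a) (hM : M ∈ Dfil b) :
    L * M ∈ Dfil (a + b) := by
  refine (Submodule.span_le (p := (Dfil (a + b)).comap (LinearMap.mulRight ℂ M))).2 ?_ hL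
  rintro _ ⟨u, i, hi, rfl⟩
  rw [SetLike.mem_coe, Submodule.mem_comap, LinearMap.mulRight_apply, mul_assoc]
  exact dfil_mono (by omega) (mulOp_mul_mem_dfil u (derOp_pow_mul_mem_dfil i hM))

lemma mem_diffOps_of_mem_dfil {n : ℕ} {L : Module.End ℂ PS} (hL : L ∈ Dfil n) :
    L ∈ DiffOps := by
  refine (Submodule.span_le (p := Subalgebra.toSubmodule DiffOps)).2 ?_ hL
  rintro _ ⟨u, i, -, rfl⟩
  exact DiffOps.mul_mem (Algebra.subset_adjoin (Or.inl ⟨u, rfl⟩))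
    (DiffOps.pow_mem (Algebra.subset_adjoin (Or.inr rfl)) i)

lemma exists_mem_dfil_of_mem_diffOps {L : Module.End ℂ PS} (hL : L ∈ DiffOps) :
    ∃ n, L ∈ Dfil n := by
  induction hL using Algebra.adjoin_induction with
  | mem x hx =>
    rcases hx with ⟨u, rfl⟩ | rfl
    · exact ⟨0, mulOp_mem_dfil u 0⟩
    · exact ⟨1, derOp_mem_dfil_one⟩
  | algebraMap r =>
    rw [Algebra.algebraMap_eq_smul_one]
    exact ⟨0, Submodule.smul_mem _ r (one_mem_dfil 0)⟩
  | add x y _ _ hx hy =>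
    obtain ⟨a, ha⟩ := hx
    obtain ⟨b, hb⟩ := hy
    exact ⟨max a b, add_mem (dfil_mono (le_max_left a b) ha) (dfil_mono (le_max_right a b) hb)⟩
  | mul x y _ _ hx hy =>
    obtain ⟨a, ha⟩ := hx
    obtain ⟨b, hb⟩ := hy
    exact ⟨a + b, mul_mem_dfil ha hb⟩

lemma mem_dfil_ordD {L : Module.End ℂ PS} (hL : L ∈ DiffOps) : L ∈ Dfil (ordD L) :=
  Nat.sInf_mem (exists_mem_dfil_of_mem_diffOps hL)

lemma ordD_le_of_mem_dfil {n : ℕ} {L : Module.End ℂ PS} (hL : L ∈ Dfil n) : ordD L ≤ n :=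
  Nat.sInf_le hL

def rightForm (m : ℕ) : (Fin (m + 1) → PS) →ₗ[ℂ] Module.End ℂ PS where
  toFun v := ∑ i : Fin (m + 1), derOp ^ (i : ℕ) * mulOp (v i)
  map_add' v w := by
    simp only [Pi.add_apply, mulOp_eq_lmul, map_add, mul_add, Finset.sum_add_distrib]
  map_smul' c v := by
    simp only [Pi.smul_apply, mulOp_eq_lmul, map_smul, mul_smul_comm, Finset.smul_sum,
      RingHom.id_apply]

lemma rightForm_apply (m : ℕ) (v : Fin (m + 1) → PS) :
    rightForm m v = ∑ i : Fin (m + 1), derOp ^ (i : ℕ) * mulOp (v i) := rfl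

lemma rightForm_smul_eq_mul_mulOp (m : ℕ) (c : PS) (v : Fin (m + 1) → PS) :
    rightForm m (c • v) = rightForm m v * mulOp c := by
  simp only [rightForm_apply, Finset.sum_mul, mul_assoc, ← mulOp_mul, Pi.smul_apply,
    smul_eq_mul, mul_comm c]

lemma rightForm_mem_dfil (m : ℕ) (v : Fin (m + 1) → PS) : rightForm m v ∈ Dfil m := by
  rw [rightForm_apply]
  exact Submodule.sum_mem _ fun i _ =>
    dfil_mono (by omega) (derOp_pow_mul_mem_dfil (n := 0) (i : ℕ) (mulOp_mem_dfil (v i) 0))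

lemma rightForm_succ (m : ℕ) (v : Fin (m + 2) → PS) :
    rightForm (m + 1) v
      = mulOp (v 0) + ∑ j : Fin (m + 1), derOp ^ ((j : ℕ) + 1) * mulOp (v j.succ) := by
  simp [rightForm_apply, Fin.sum_univ_succ]

lemma rightForm_commutator_X (m : ℕ) (v : Fin (m + 2) → PS) :
    rightForm (m + 1) v * mulOp PowerSeries.X - mulOp PowerSeries.X * rightForm (m + 1) v
      = rightForm m fun j => ((j + 1 : ℕ) : ℂ) • v j.succ := by
  simp only [rightForm_succ, rightForm_apply, add_mul, mul_add, Finset.sum_mul, Finset.mul_sum,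
    ← mulOp_mul, mul_comm (v 0), add_sub_add_left_eq_sub, ← Finset.sum_sub_distrib]
  refine Finset.sum_congr rfl fun j _ => ?_
  rw [mul_assoc, ← mulOp_mul, mul_comm, mulOp_mul, ← mul_assoc, derOp_pow_succ_mul_mulOp_X,
    mulOp_eq_lmul, map_smul]
  noncomm_ring

lemma rightForm_injective (m : ℕ) : Function.Injective (rightForm m) := by
  rw [← LinearMap.ker_eq_bot, LinearMap.ker_eq_bot']
  induction m with
  | zero =>
    intro v hv
    have h0 : v 0 = 0 := mulOp_injective (by simpa [rightForm_apply, mulOp_zero] using hv)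
    exact funext fun i => by rw [Fin.fin_one_eq_zero i, h0, Pi.zero_apply]
  | succ m ih =>
    intro v hv
    have hsucc : ∀ j : Fin (m + 1), v j.succ = 0 := fun j => by
      have hcomm := ih _ (by rw [← rightForm_commutator_X, hv, zero_mul, mul_zero, sub_zero])
      exact (smul_eq_zero.mp (congr_fun hcomm j)).resolve_left
        (Nat.cast_ne_zero.mpr j.val.succ_ne_zero)
    have h0 : v 0 = 0 := mulOp_injective (by simpa [rightForm_succ, hsucc, mulOp_zero] using hv)
    exact funext fun i => Fin.cases h0 hsucc i

def rightDfil (n : ℕ) : Submodule ℂ (Module.End ℂ PS) :=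
  Submodule.span ℂ {L | ∃ (u : PS) (i : ℕ), i ≤ n ∧ L = derOp ^ i * mulOp u}

lemma rightDfil_mono {m n : ℕ} (h : m ≤ n) : rightDfil m ≤ rightDfil n :=
  Submodule.span_mono fun _ ⟨u, i, hi, hL⟩ => ⟨u, i, hi.trans h, hL⟩

lemma derOp_mul_mem_rightDfil {n : ℕ} {L : Module.End ℂ PS} (hL : L ∈ rightDfil n) :
    derOp * L ∈ rightDfil (n + 1) := by
  refine (Submodule.span_le (p := (rightDfil (n + 1)).comap (LinearMap.mulLeft ℂ derOp))).2 ?_ hL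
  rintro _ ⟨u, i, hi, rfl⟩
  rw [SetLike.mem_coe, Submodule.mem_comap, LinearMap.mulLeft_apply, ← mul_assoc, ← pow_succ']
  exact Submodule.subset_span ⟨u, i + 1, by omega, rfl⟩

lemma mulOp_mul_derOp_pow_mem_rightDfil (u : PS) (i : ℕ) :
    mulOp u * derOp ^ i ∈ rightDfil i := by
  induction i generalizing u with
  | zero => exact Submodule.subset_span ⟨u, 0, le_rfl, by simp⟩
  | succ i ih =>
    have h : mulOp u * derOp ^ (i + 1)
        = derOp * (mulOp u * derOp ^ i) - mulOp (PowerSeries.derivative ℂ u) * derOp ^ i := by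
      rw [← mul_assoc, derOp_mul_mulOp, add_mul, mul_assoc, ← pow_succ', add_sub_cancel_right]
    rw [h]
    exact sub_mem (derOp_mul_mem_rightDfil (ih u)) (rightDfil_mono (Nat.le_succ i) (ih _))

lemma dfil_le_rightDfil (n : ℕ) : Dfil n ≤ rightDfil n :=
  Submodule.span_le.2 fun _ ⟨u, i, hi, hL⟩ =>
    hL ▸ rightDfil_mono hi (mulOp_mul_derOp_pow_mem_rightDfil u i)

lemma rightDfil_le_range_rightForm (n : ℕ) : rightDfil n ≤ LinearMap.range (rightForm n) := by
  refine Submodule.span_le.2 ?_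
  rintro _ ⟨u, i, hi, rfl⟩
  refine ⟨Pi.single ⟨i, by omega⟩ u, ?_⟩
  rw [rightForm_apply, Fintype.sum_eq_single ⟨i, by omega⟩ fun j hj => by
    rw [Pi.single_eq_of_ne hj, mulOp_zero, mul_zero]]
  simp

lemma exists_rightForm_eq {n : ℕ} {L : Module.End ℂ PS} (hL : L ∈ Dfil n) :
    ∃ v, rightForm n v = L :=
  rightDfil_le_range_rightForm n (dfil_le_rightDfil n hL)

lemma exists_ne_zero_apply_eq_zero_of_card_lt {ι : Type*} [Fintype ι] {T : ℕ}
    (W : (ι → PS) →ₗ[ℂ] Module.End ℂ PS) (hW : ∀ p, W p ∈ Dfil T)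
    (hsmul : ∀ (c : PS) p, W (c • p) = W p * mulOp c) (hcard : T + 1 < Fintype.card ι) :
    ∃ p, p ≠ 0 ∧ W p = 0 := by
  choose coeff hcoeff using fun p => exists_rightForm_eq (hW p)
  let Φ : (ι → PS) →ₗ[PS] (Fin (T + 1) → PS) :=
    { toFun := coeff
      map_add' := fun p q => rightForm_injective T <| by
        rw [map_add, hcoeff, hcoeff, hcoeff, map_add]
      map_smul' := fun c p => rightForm_injective T <| by
        rw [RingHom.id_apply, rightForm_smul_eq_mul_mulOp, hcoeff, hcoeff, hsmul] }
  have hΦ : ¬ Function.Injective Φ := fun h => by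
    have := LinearMap.finrank_le_finrank_of_injective h
    simp only [Module.finrank_fintype_fun_eq_card, Fintype.card_fin] at this
    omega
  obtain ⟨p, hp, hp0⟩ : ∃ p, Φ p = 0 ∧ p ≠ 0 := by
    simpa [injective_iff_map_eq_zero] using hΦ
  refine ⟨p, hp0, ?_⟩
  rw [← hcoeff p, show coeff p = 0 from hp, map_zero]

lemma exists_mul_rightForm_eq_mul_rightForm {a l : ℕ} {A Q : Module.End ℂ PS}
    (hA : A ∈ Dfil a) (hQ : Q ∈ Dfil l) :
    ∃ (y : Fin (l + 1) → PS) (x : Fin (a + 1) → PS), (y ≠ 0 ∨ x ≠ 0) ∧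
      A * rightForm l y = Q * rightForm a x := by
  let W : (Fin (l + 1) ⊕ Fin (a + 1) → PS) →ₗ[ℂ] Module.End ℂ PS :=
    LinearMap.mulLeft ℂ A ∘ₗ rightForm l ∘ₗ LinearMap.funLeft ℂ PS Sum.inl -
      LinearMap.mulLeft ℂ Q ∘ₗ rightForm a ∘ₗ LinearMap.funLeft ℂ PS Sum.inr
  have hW : ∀ p, W p ∈ Dfil (a + l) := fun p =>
    sub_mem (mul_mem_dfil hA (rightForm_mem_dfil _ _))
      (dfil_mono (by omega) (mul_mem_dfil hQ (rightForm_mem_dfil _ _)))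
  have hsmul : ∀ (c : PS) p, W (c • p) = W p * mulOp c := fun c p => by
    simp only [W, LinearMap.sub_apply, LinearMap.comp_apply, LinearMap.mulLeft_apply, sub_mul,
      mul_assoc, ← rightForm_smul_eq_mul_mulOp]
    rfl
  obtain ⟨p, hp0, hp⟩ := exists_ne_zero_apply_eq_zero_of_card_lt W hW hsmul (by simp; omega)
  refine ⟨p ∘ Sum.inl, p ∘ Sum.inr, ?_, sub_eq_zero.mp hp⟩
  by_contra! h
  exact hp0 (funext (Sum.rec (congr_fun h.1) (congr_fun h.2)))

lemma exists_ne_zero_mul_eq_mul [NoZeroDivisors DiffOps] (A : DiffOps) {Q : DiffOps}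
    (hQ : Q ≠ 0) :
    ∃ Y X : DiffOps, Y ≠ 0 ∧ (Y : Module.End ℂ PS) ∈ Dfil (ordD Q) ∧ A * Y = Q * X := by
  obtain ⟨y, x, hyx, h⟩ :=
    exists_mul_rightForm_eq_mul_rightForm (mem_dfil_ordD A.2) (mem_dfil_ordD Q.2)
  let Y : DiffOps := ⟨rightForm _ y, mem_diffOps_of_mem_dfil (rightForm_mem_dfil _ _)⟩
  let X : DiffOps := ⟨rightForm _ x, mem_diffOps_of_mem_dfil (rightForm_mem_dfil _ _)⟩
  have hXY : A * Y = Q * X := Subtype.ext h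
  refine ⟨Y, X, fun hY => ?_, rightForm_mem_dfil _ _, hXY⟩
  have hy : y = 0 := rightForm_injective _ (by simpa [Y] using congr_arg Subtype.val hY)
  have hX : X ≠ 0 := fun hX => hyx.resolve_left (not_not.mpr hy) <|
    rightForm_injective _ (by simpa [X] using congr_arg Subtype.val hX)
  exact mul_ne_zero hQ hX (by rw [← hXY, hY, mul_zero])

lemma exists_common_right_denominator {K : Type*} [DivisionRing K] (ι : DiffOps →+* K)
    (hinj : Function.Injective ι) (P Q : ℕ → DiffOps) (n : ℕ)
    (hQ : ∀ i, i < n → Q i ≠ 0) :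
    ∃ Lr : DiffOps, Lr ≠ 0 ∧
      (Lr : Module.End ℂ PS) ∈
        Dfil (∑ i ∈ Finset.range n, ordD (Q i : Module.End ℂ PS)) ∧
      ∀ k, k < n → ∃ A : DiffOps,
        chainProd (fun i => ι (P i) * (ι (Q i))⁻¹) k * ι Lr = ι A := by
  have : NoZeroDivisors DiffOps := hinj.noZeroDivisors ι (map_zero ι) (map_mul ι)
  set g : ℕ → K := fun i => ι (P i) * (ι (Q i))⁻¹
  induction n with
  | zero => exact ⟨1, one_ne_zero, one_mem_dfil _, fun k hk => absurd hk (Nat.not_lt_zero k)⟩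
  | succ n ih =>
    obtain ⟨L, hL0, hLmem, hL⟩ := ih fun i hi => hQ i (by omega)
    obtain ⟨u, B, hchain, huL⟩ :
        ∃ (u : K) (B : DiffOps), chainProd g n = g n * u ∧ u * ι L = ι B := by
      cases n with
      | zero => exact ⟨1, L, (mul_one _).symm, one_mul _⟩
      | succ m =>
        obtain ⟨A, hA⟩ := hL m (by omega)
        exact ⟨chainProd g m, A, rfl, hA⟩
    have hQn := hQ n (by omega)
    obtain ⟨Y, X, hY0, hYmem, hBY⟩ := exists_ne_zero_mul_eq_mul B hQn
    refine ⟨L * Y, mul_ne_zero hL0 hY0, ?_, fun k hk => ?_⟩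
    · rw [Finset.sum_range_succ]
      exact mul_mem_dfil hLmem hYmem
    rcases Nat.lt_succ_iff_lt_or_eq.mp hk with hk | rfl
    · obtain ⟨A, hA⟩ := hL k hk
      exact ⟨A * Y, by rw [map_mul, map_mul, ← mul_assoc, hA]⟩
    · refine ⟨P k * X, ?_⟩
      calc chainProd g k * ι (L * Y) = ι (P k) * (ι (Q k))⁻¹ * (u * ι L) * ι Y := by
            rw [hchain, map_mul]; simp only [g, mul_assoc]
        _ = ι (P k) * (ι (Q k))⁻¹ * ι (Q k * X) := by rw [huL, mul_assoc, ← map_mul, hBY]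
        _ = ι (P k * X) := by
            rw [map_mul, map_mul, mul_assoc,
              inv_mul_cancel_left₀ ((map_ne_zero_iff ι hinj).mpr hQn)]

theorem common_right_denominator_general {K : Type*} [DivisionRing K] (ι : DiffOps →+* K)
    (hinj : Function.Injective ι)
    (n : ℕ) (P Q : ℕ → DiffOps) (ℓ : ℕ → ℕ)
    (hQ0 : ∀ i, i < n → Q i ≠ 0)
    (hQord : ∀ i, i < n → ordD (Q i : Module.End ℂ PS) = ℓ i) :
    ∃ Lr : DiffOps, Lr ≠ 0 ∧
      ordD (Lr : Module.End ℂ PS) ≤ ∑ i ∈ Finset.range n, ℓ i ∧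
      ∀ k, k < n → ∃ A : DiffOps,
        chainProd (fun i => ι (P i) * (ι (Q i))⁻¹) k * ι Lr = ι A := by
  obtain ⟨Lr, hLr0, hLr, hA⟩ := exists_common_right_denominator ι hinj P Q n hQ0
  have hsum :
      ∑ i ∈ Finset.range n, ordD (Q i : Module.End ℂ PS) = ∑ i ∈ Finset.range n, ℓ i :=
    Finset.sum_congr rfl fun i hi => hQord i (Finset.mem_range.mp hi)
  exact ⟨Lr, hLr0, ordD_le_of_mem_dfil (hsum ▸ hLr), hA⟩

/-- **common right denominators.** Given differential operators `P i`, `Q i`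
(`0 ≤ i < n`) with each `Q i` nonzero of order `ℓ i`, there is a nonzero differential
operator `L_r` of order at most `ℓ 0 + ⋯ + ℓ (n-1)` such that
`P k Q k⁻¹ ⋯ P 0 Q 0⁻¹ L_r` is a differential operator for every `k < n`. -/
theorem common_right_denominator {K : Type*} [DivisionRing K] (ι : DiffOps →+* K)
    (hinj : Function.Injective ι)
    (hfrac : ∀ u : K, ∃ a b : DiffOps, b ≠ 0 ∧ u = ι a * (ι b)⁻¹)
    (n : ℕ) (hn : 0 < n) (P Q : ℕ → DiffOps) (ℓ : ℕ → ℕ)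
    (hQ0 : ∀ i, i < n → Q i ≠ 0)
    (hQord : ∀ i, i < n → ordD (Q i : Module.End ℂ PS) = ℓ i) :
    ∃ Lr : DiffOps, Lr ≠ 0 ∧
      ordD (Lr : Module.End ℂ PS) ≤ ∑ i ∈ Finset.range n, ℓ i ∧
      ∀ k, k < n → ∃ A : DiffOps,
        chainProd (fun i => ι (P i) * (ι (Q i))⁻¹) k * ι Lr = ι A :=
  common_right_denominator_general ι hinj n P Q ℓ hQ0 hQord
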